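/- arXiv:1906.00150 — 2 statements merged into one kernel-verified Lean document; each statement's English description precedes it below -/
import Mathlib

section
/- For every output coordinate l, the output h^L_l is integrable and its expectation satisfies E[h^L_l] = (∏_{i=1}^L n_{i-1} μ_w^i) · μ_x · μ_m. In particular, when μ_w^i ≠ 0 for all i and μ_x ≠ 0, the expected output is directly proportional to the mask mean μ_m (Theorem 1: variable sparsity problem for linear networks with zero imputation). -/
/-!
Order the parameters by depth: features and masks at depth `0`, the weights of layer `i` at
depth `i + 1`. Layer `i` of the network is a measurable function of the parameters of depth
`≤ i`, so by mutual independence each weight feeding into layer `i + 1` is independent of the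
unit it multiplies. Taking expectations of `h^{i+1}_j = ∑ₖ W^i_{jk} h^i_k` term by term then
multiplies the common mean of layer `i` by `n i · μw i`, starting from `μx · μm` at the input.
-/

open MeasureTheory ProbabilityTheory

section SigmaOf

variable {Ω ι : Type*} {f : ι → Ω → ℝ} {S T : Finset ι}

abbrev sigmaOf (f : ι → Ω → ℝ) (S : Finset ι) : MeasurableSpace Ω :=
  MeasurableSpace.comap (fun ω (s : S) => f s ω) MeasurableSpace.pi

lemma measurable_sigmaOf_apply {s : ι} (hs : s ∈ S) : Measurable[sigmaOf f S] (f s) :=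
  (measurable_pi_apply (⟨s, hs⟩ : S)).comp (comap_measurable fun ω (s : S) => f s ω)

lemma sigmaOf_mono (hST : S ⊆ T) : sigmaOf f S ≤ sigmaOf f T := by
  have : Measurable[sigmaOf f T] fun ω (s : S) => f s ω :=
    @measurable_pi_lambda _ _ _ (sigmaOf f T) _ _ fun s => measurable_sigmaOf_apply (hST s.2)
  exact this.comap_le

lemma ProbabilityTheory.iIndepFun.indepFun_of_measurable_sigmaOf [MeasurableSpace Ω]
    {μ : Measure Ω} (hf : iIndepFun f μ) (hmeas : ∀ i, AEMeasurable (f i) μ)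
    (hST : Disjoint S T) {X Y : Ω → ℝ} (hX : Measurable[sigmaOf f S] X)
    (hY : Measurable[sigmaOf f T] Y) : IndepFun X Y μ := by
  have hblocks := hf.indepFun_finset₀ S T hST hmeas
  rw [IndepFun_iff_Indep] at hblocks ⊢
  exact indep_of_indep_of_le_right (indep_of_indep_of_le_left hblocks hX.comap_le) hY.comap_le

end SigmaOf

section LinearLayer

variable {Ω κ : Type*} [MeasurableSpace Ω] {μ : Measure Ω} [Fintype κ] {W X : κ → Ω → ℝ}

lemma integrable_sum_mul_of_indepFun (hindep : ∀ k, IndepFun (W k) (X k) μ)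
    (hW : ∀ k, Integrable (W k) μ) (hX : ∀ k, Integrable (X k) μ) :
    Integrable (fun ω => ∑ k, W k ω * X k ω) μ :=
  integrable_finsetSum _ fun k _ => (hindep k).integrable_mul (hW k) (hX k)

lemma integral_sum_mul_of_indepFun (hindep : ∀ k, IndepFun (W k) (X k) μ)
    (hW : ∀ k, Integrable (W k) μ) (hX : ∀ k, Integrable (X k) μ) {a c : ℝ}
    (hWmean : ∀ k, ∫ ω, W k ω ∂μ = a) (hXmean : ∀ k, ∫ ω, X k ω ∂μ = c) :
    ∫ ω, ∑ k, W k ω * X k ω ∂μ = Fintype.card κ * a * c := by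
  rw [integral_finsetSum (f := fun k ω => W k ω * X k ω) _
    fun k _ => (hindep k).integrable_mul (hW k) (hX k)]
  simp_rw [(hindep _).integral_fun_mul_eq_mul_integral (hW _).1 (hX _).1, hWmean, hXmean]
  simp [mul_assoc]

end LinearLayer

section LinearNetwork

variable {Ω : Type*} {L : ℕ} {n : ℕ → ℕ}

abbrev NetworkParam (L : ℕ) (n : ℕ → ℕ) : Type :=
  (Σ i : Fin L, Fin (n (i + 1)) × Fin (n i)) ⊕ (Fin (n 0) ⊕ Fin (n 0))

def NetworkParam.depth : NetworkParam L n → ℕ :=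
  Sum.elim (fun p => p.1 + 1) fun _ => 0

@[simp]
lemma NetworkParam.depth_inl (p : Σ i : Fin L, Fin (n (i + 1)) × Fin (n i)) :
    NetworkParam.depth (Sum.inl p : NetworkParam L n) = p.1 + 1 := rfl

@[simp]
lemma NetworkParam.depth_inr (s : Fin (n 0) ⊕ Fin (n 0)) :
    NetworkParam.depth (Sum.inr s : NetworkParam L n) = 0 := rfl

def networkParams (W : (i : ℕ) → Fin (n (i + 1)) → Fin (n i) → Ω → ℝ)
    (ht m : Fin (n 0) → Ω → ℝ) : NetworkParam L n → Ω → ℝ :=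
  Sum.elim (fun p => W p.1 p.2.1 p.2.2) (Sum.elim ht m)

def paramsUpTo (L : ℕ) (n : ℕ → ℕ) (i : ℕ) : Finset (NetworkParam L n) :=
  {s | NetworkParam.depth s ≤ i}

@[simp]
lemma mem_paramsUpTo {i : ℕ} {s : NetworkParam L n} :
    s ∈ paramsUpTo L n i ↔ NetworkParam.depth s ≤ i := by
  simp [paramsUpTo]

lemma measurable_layer_sigmaOf_paramsUpTo (W : (i : ℕ) → Fin (n (i + 1)) → Fin (n i) → Ω → ℝ)
    (ht m : Fin (n 0) → Ω → ℝ) (h : (i : ℕ) → Fin (n i) → Ω → ℝ)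
    (h0 : ∀ (k : Fin (n 0)) (ω : Ω), h 0 k ω = ht k ω * m k ω)
    (hrec : ∀ i < L, ∀ (j : Fin (n (i + 1))) (ω : Ω),
      h (i + 1) j ω = ∑ k, W i j k ω * h i k ω) :
    ∀ i ≤ L, ∀ k, Measurable[sigmaOf (networkParams W ht m) (paramsUpTo L n i)] (h i k) := by
  intro i
  induction i with
  | zero =>
    intro _ k
    rw [show h 0 k = ht k * m k from funext (h0 k)]
    exact (measurable_sigmaOf_apply (s := (.inr (.inl k) : NetworkParam L n)) (by simp)).mul
      (measurable_sigmaOf_apply (s := (.inr (.inr k) : NetworkParam L n)) (by simp))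
  | succ i ih =>
    intro (hi : i < L) j
    rw [show h (i + 1) j = fun ω => ∑ k, W i j k ω * h i k ω from funext (hrec i hi j)]
    refine Finset.measurable_sum _ fun k _ => Measurable.mul ?_ ?_
    · exact measurable_sigmaOf_apply (s := (.inl ⟨⟨i, hi⟩, j, k⟩ : NetworkParam L n))
        (by simp)
    · refine (ih hi.le k).mono (sigmaOf_mono ?_) le_rfl
      intro s
      simp only [mem_paramsUpTo]
      omega

end LinearNetwork

theorem vsp_linear_network_general
    {Ω : Type*} [MeasureSpace Ω]
    (L : ℕ) (n : ℕ → ℕ)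
    (W : (i : ℕ) → Fin (n (i + 1)) → Fin (n i) → Ω → ℝ)
    (ht m : Fin (n 0) → Ω → ℝ)
    (μw : ℕ → ℝ) (μx μm : ℝ)
    (hWint : ∀ i < L, ∀ (j : Fin (n (i + 1))) (k : Fin (n i)), Integrable (W i j k))
    (hWmean : ∀ i < L, ∀ (j : Fin (n (i + 1))) (k : Fin (n i)), ∫ ω, W i j k ω = μw i)
    (hhint : ∀ k, Integrable (ht k)) (hhmean : ∀ k, ∫ ω, ht k ω = μx)
    (hmint : ∀ k, Integrable (m k)) (hmmean : ∀ k, ∫ ω, m k ω = μm)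
    (hindep : iIndepFun
      (Sum.elim
        (fun p : Σ i : Fin L, Fin (n ((i : ℕ) + 1)) × Fin (n (i : ℕ)) =>
          W p.1 p.2.1 p.2.2)
        (Sum.elim ht m)) ℙ)
    (h : (i : ℕ) → Fin (n i) → Ω → ℝ)
    (h0 : ∀ (k : Fin (n 0)) (ω : Ω), h 0 k ω = ht k ω * m k ω)
    (hrec : ∀ i < L, ∀ (j : Fin (n (i + 1))) (ω : Ω),
      h (i + 1) j ω = ∑ k, W i j k ω * h i k ω) :
    ∀ l : Fin (n L), Integrable (h L l) ∧
      ∫ ω, h L l ω = (∏ i ∈ Finset.range L, (n i : ℝ) * μw i) * μx * μm := by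
  have hmeas : ∀ s : NetworkParam L n, AEMeasurable (networkParams W ht m s) := by
    rintro (⟨i, j, k⟩ | k | k)
    exacts [(hWint i i.2 j k).aemeasurable, (hhint k).aemeasurable, (hmint k).aemeasurable]
  have hinput : ∀ k, IndepFun (ht k) (m k) := fun k =>
    hindep.indepFun (i := .inr (.inl k)) (j := .inr (.inr k)) (by simp)
  have hweight : ∀ i (hi : i < L) j k, IndepFun (W i j k) (h i k) := fun i hi j k =>
    hindep.indepFun_of_measurable_sigmaOf hmeas
      (S := {(.inl ⟨⟨i, hi⟩, j, k⟩ : NetworkParam L n)}) (T := paramsUpTo L n i) (by simp)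
      (measurable_sigmaOf_apply (Finset.mem_singleton_self _))
      (measurable_layer_sigmaOf_paramsUpTo W ht m h h0 hrec i hi.le k)
  suffices ∀ i ≤ L, ∀ k, Integrable (h i k) ∧
      ∫ ω, h i k ω = (∏ t ∈ Finset.range i, (n t : ℝ) * μw t) * μx * μm from
    fun l => this L le_rfl l
  intro i
  induction i with
  | zero =>
    intro _ k
    rw [show h 0 k = ht k * m k from funext (h0 k)]
    refine ⟨(hinput k).integrable_mul (hhint k) (hmint k), ?_⟩
    rw [(hinput k).integral_mul_eq_mul_integral (hhint k).1 (hmint k).1, hhmean, hmmean]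
    simp
  | succ i ih =>
    intro (hi : i < L) j
    rw [show h (i + 1) j = fun ω => ∑ k, W i j k ω * h i k ω from funext (hrec i hi j)]
    refine ⟨integrable_sum_mul_of_indepFun (hweight i hi j) (hWint i hi j) (ih hi.le · |>.1), ?_⟩
    rw [integral_sum_mul_of_indepFun (hweight i hi j) (hWint i hi j) (ih hi.le · |>.1)
      (hWmean i hi j) (ih hi.le · |>.2), Finset.prod_range_succ, Fintype.card_fin]
    ring

/-- **Theorem 1 (variable sparsity problem for linear networks).**
An `L`-layer linear network (identity activation, zero bias) is applied to the
zero-imputed input `h⁰ₖ = h̃⁰ₖ · mₖ`.  Layer `i` (for `0 ≤ i < L`, mapping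
`h^i` to `h^{i+1}`) has weight matrix `W i` with integrable, mean-`μw i`
entries; the features `ht k` have mean `μx` and the masks `m k` have mean `μm`;
all weight entries, features and masks are mutually independent.  Then every
output coordinate `h L l` is integrable and
`E[h L l] = (∏_{i<L} n i · μw i) · μx · μm`. -/
theorem vsp_linear_network
    {Ω : Type*} [MeasureSpace Ω] [IsProbabilityMeasure (ℙ : Measure Ω)]
    (L : ℕ) (hL : 1 ≤ L) (n : ℕ → ℕ) (hn : ∀ i ≤ L, 1 ≤ n i)
    (W : (i : ℕ) → Fin (n (i + 1)) → Fin (n i) → Ω → ℝ)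
    (ht m : Fin (n 0) → Ω → ℝ)
    (μw : ℕ → ℝ) (μx μm : ℝ)
    (hWint : ∀ i < L, ∀ (j : Fin (n (i + 1))) (k : Fin (n i)), Integrable (W i j k))
    (hWmean : ∀ i < L, ∀ (j : Fin (n (i + 1))) (k : Fin (n i)), ∫ ω, W i j k ω = μw i)
    (hhint : ∀ k, Integrable (ht k)) (hhmean : ∀ k, ∫ ω, ht k ω = μx)
    (hmint : ∀ k, Integrable (m k)) (hmmean : ∀ k, ∫ ω, m k ω = μm)
    (hindep : iIndepFun
      (Sum.elim
        (fun p : Σ i : Fin L, Fin (n ((i : ℕ) + 1)) × Fin (n (i : ℕ)) =>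
          W p.1 p.2.1 p.2.2)
        (Sum.elim ht m)) ℙ)
    (h : (i : ℕ) → Fin (n i) → Ω → ℝ)
    (h0 : ∀ (k : Fin (n 0)) (ω : Ω), h 0 k ω = ht k ω * m k ω)
    (hrec : ∀ i < L, ∀ (j : Fin (n (i + 1))) (ω : Ω),
      h (i + 1) j ω = ∑ k, W i j k ω * h i k ω) :
    ∀ l : Fin (n L), Integrable (h L l) ∧
      ∫ ω, h L l ω = (∏ i ∈ Finset.range L, (n i : ℝ) * μw i) * μx * μm :=
  vsp_linear_network_general L n W ht m μw μx μm hWint hWmean hhint hhmean hmint hmmean hindep h h0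
    hrec
end

section
/- For every output coordinate l, the output h^L_l is integrable and its expectation satisfies E[h^L_l] = (f_L ∘ f_{L-1} ∘ ⋯ ∘ f_1)(μ_x · μ_m), where f_i(x) = σ(n_{i-1} μ_w^i x + μ_b^i). Hence the expected output of an affine-activation network under zero imputation is determined by the mask mean μ_m through the composition of the affine maps f_i (Theorem 2). -/
/-!
Each `h i k` is a.e. a measurable function of the parameters of the layers before `i` and of the
inputs, so the weight `W i j k` is independent of it and `E[W i j k * h i k] = μw i * E[h i k]`.
As `σ` is affine it commutes with expectation, so by induction the means of the layers follow
the maps `f_i` layer by layer, starting from `E[h̃ₖ mₖ] = μx μm`.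
-/

open MeasureTheory ProbabilityTheory

/-- The composition `f_L ∘ ⋯ ∘ f_1` of the per-layer affine maps
`f_{i+1}(x) = σ (n i · μw i · x + μb i)` (0-based layer indexing):
`layerComp σ n μw μb L x = (f_L ∘ ⋯ ∘ f_1) x`. -/
def layerComp (σ : ℝ → ℝ) (n : ℕ → ℕ) (μw μb : ℕ → ℝ) : ℕ → ℝ → ℝ
  | 0, x => x
  | i + 1, x => σ ((n i : ℝ) * μw i * layerComp σ n μw μb i x + μb i)

section Independence

variable {Ω ι γ : Type*} {mΩ : MeasurableSpace Ω} {μ : Measure Ω} {β : ι → Type*}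
  {mβ : ∀ i, MeasurableSpace (β i)} {X : ∀ i, Ω → β i}
  [TopologicalSpace γ] [TopologicalSpace.PseudoMetrizableSpace γ] [MeasurableSpace γ]
  [BorelSpace γ]

theorem ProbabilityTheory.iIndepFun.indepFun_of_aestronglyMeasurable_iSup (hX : iIndepFun X μ)
    (hXm : ∀ i, Measurable (X i)) {S : Set ι} {i : ι} (hi : i ∉ S) {g : Ω → γ}
    (hg : AEStronglyMeasurable[⨆ j ∈ S, (mβ j).comap (X j)] g μ) : IndepFun (X i) g μ := by
  obtain ⟨g', hg'm, hgg'⟩ := hg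
  have hsplit := indep_iSup_of_disjoint (fun j => (hXm j).comap_le)
    ((iIndepFun_iff_iIndep _ _ _).1 hX) (Set.disjoint_singleton_left.2 hi)
  refine IndepFun.congr ?_ (ae_eq_refl _) hgg'.symm
  rw [IndepFun_iff_Indep]
  exact indep_of_indep_of_le hsplit
    (le_iSup₂ (f := fun j (_ : j ∈ ({i} : Set ι)) => (mβ j).comap (X j)) i rfl)
    hg'm.measurable.comap_le

end Independence

section SumOfProducts

variable {Ω ι : Type*} {mΩ : MeasurableSpace Ω} {μ : Measure Ω} {s : Finset ι}
  {w g : ι → Ω → ℝ}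

theorem integrable_sum_mul_of_indepFun_s1 (hind : ∀ k ∈ s, IndepFun (w k) (g k) μ)
    (hw : ∀ k ∈ s, Integrable (w k) μ) (hg : ∀ k ∈ s, Integrable (g k) μ) :
    Integrable (fun ω => ∑ k ∈ s, w k ω * g k ω) μ :=
  integrable_finsetSum _ fun k hk => (hind k hk).integrable_mul (hw k hk) (hg k hk)

theorem integral_sum_mul_of_indepFun_s1 (hind : ∀ k ∈ s, IndepFun (w k) (g k) μ)
    (hw : ∀ k ∈ s, Integrable (w k) μ) (hg : ∀ k ∈ s, Integrable (g k) μ) :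
    ∫ ω, ∑ k ∈ s, w k ω * g k ω ∂μ = ∑ k ∈ s, (∫ ω, w k ω ∂μ) * ∫ ω, g k ω ∂μ := by
  rw [integral_finsetSum (f := fun k ω => w k ω * g k ω) _
    fun k hk => (hind k hk).integrable_mul (hw k hk) (hg k hk)]
  exact Finset.sum_congr rfl fun k hk =>
    (hind k hk).integral_mul_eq_mul_integral (hw k hk).1 (hg k hk).1

end SumOfProducts

theorem integrable_and_integral_eq_layerComp {Ω : Type*} {mΩ : MeasurableSpace Ω}
    {μ : Measure Ω} [IsProbabilityMeasure μ] {L : ℕ} {n : ℕ → ℕ} {σ : ℝ → ℝ} {a c : ℝ}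
    (hσ : ∀ x, σ x = a * x + c)
    {W : (i : ℕ) → Fin (n (i + 1)) → Fin (n i) → Ω → ℝ} {b : (i : ℕ) → Fin (n (i + 1)) → Ω → ℝ}
    {h : (i : ℕ) → Fin (n i) → Ω → ℝ} {μw μb : ℕ → ℝ} {x₀ : ℝ}
    (hWint : ∀ i < L, ∀ j k, Integrable (W i j k) μ)
    (hWmean : ∀ i < L, ∀ j k, ∫ ω, W i j k ω ∂μ = μw i)
    (hbint : ∀ i < L, ∀ j, Integrable (b i j) μ) (hbmean : ∀ i < L, ∀ j, ∫ ω, b i j ω ∂μ = μb i)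
    (hWh : ∀ i < L, ∀ j k, IndepFun (W i j k) (h i k) μ)
    (h0 : ∀ k, Integrable (h 0 k) μ ∧ ∫ ω, h 0 k ω ∂μ = x₀)
    (hrec : ∀ i < L, ∀ j ω, h (i + 1) j ω = σ (∑ k, W i j k ω * h i k ω + b i j ω)) :
    ∀ i ≤ L, ∀ k, Integrable (h i k) μ ∧ ∫ ω, h i k ω ∂μ = layerComp σ n μw μb i x₀ := by
  intro i
  induction i with
  | zero => exact fun _ => h0
  | succ i ih =>
    intro hi j
    replace hi : i < L := hi
    have hprev := ih hi.le
    have hsum_int := integrable_sum_mul_of_indepFun_s1 (s := Finset.univ)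
      (fun k _ => hWh i hi j k) (fun k _ => hWint i hi j k) (fun k _ => (hprev k).1)
    have hpreact_int : Integrable (fun ω => ∑ k, W i j k ω * h i k ω + b i j ω) μ :=
      hsum_int.add (hbint i hi j)
    have hpreact_mean : ∫ ω, (∑ k, W i j k ω * h i k ω + b i j ω) ∂μ
        = n i * μw i * layerComp σ n μw μb i x₀ + μb i := by
      rw [integral_add hsum_int (hbint i hi j), integral_sum_mul_of_indepFun_s1
        (fun k _ => hWh i hi j k) (fun k _ => hWint i hi j k) (fun k _ => (hprev k).1)]
      simp [hWmean i hi j, (hprev _).2, hbmean i hi j, mul_assoc]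
    have haffine : h (i + 1) j = fun ω => a * (∑ k, W i j k ω * h i k ω + b i j ω) + c :=
      funext fun ω => (hrec i hi j ω).trans (hσ _)
    rw [haffine]
    refine ⟨(hpreact_int.const_mul a).add (integrable_const c), ?_⟩
    calc ∫ ω, a * (∑ k, W i j k ω * h i k ω + b i j ω) + c ∂μ
        = a * ∫ ω, (∑ k, W i j k ω * h i k ω + b i j ω) ∂μ + c := by
          rw [integral_add (hpreact_int.const_mul a) (integrable_const c), integral_const_mul]
          simp
      _ = layerComp σ n μw μb (i + 1) x₀ := by rw [hpreact_mean, layerComp, hσ]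

section NetworkParameters

variable {Ω : Type*} {L : ℕ} {n : ℕ → ℕ}

abbrev NetIndex (L : ℕ) (n : ℕ → ℕ) : Type :=
  ((Σ i : Fin L, Fin (n ((i : ℕ) + 1)) × Fin (n (i : ℕ))) ⊕ (Σ i : Fin L, Fin (n ((i : ℕ) + 1))))
    ⊕ (Fin (n 0) ⊕ Fin (n 0))

def netParams (W : (i : ℕ) → Fin (n (i + 1)) → Fin (n i) → Ω → ℝ)
    (b : (i : ℕ) → Fin (n (i + 1)) → Ω → ℝ) (ht m : Fin (n 0) → Ω → ℝ) :
    NetIndex L n → Ω → ℝ :=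
  Sum.elim (Sum.elim (fun p => W p.1 p.2.1 p.2.2) (fun p => b p.1 p.2)) (Sum.elim ht m)

/-- Weights and biases of layer `i` (0-based) sit at level `i + 1`, features and masks at
level `0`, so that `h i` is determined by the parameters of level at most `i`. -/
def netLevel : NetIndex L n → ℕ :=
  Sum.elim (Sum.elim (fun p => p.1 + 1) (fun p => p.1 + 1)) fun _ => 0

abbrev levelSigma (Y : NetIndex L n → Ω → ℝ) (i : ℕ) : MeasurableSpace Ω :=
  ⨆ idx ∈ {idx | netLevel idx ≤ i}, MeasurableSpace.comap (Y idx) inferInstance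

theorem levelSigma_mono (Y : NetIndex L n → Ω → ℝ) : Monotone (levelSigma Y) :=
  fun _ _ hij => biSup_mono fun _ hidx => le_trans hidx hij

theorem measurable_levelSigma {Y : NetIndex L n → Ω → ℝ} {idx : NetIndex L n} {i : ℕ}
    (hidx : netLevel idx ≤ i) : Measurable[levelSigma Y i] (Y idx) :=
  Measurable.of_comap_le (le_iSup₂ (f := fun idx (_ : idx ∈ {idx | netLevel idx ≤ i}) =>
    MeasurableSpace.comap (Y idx) inferInstance) idx hidx)

theorem aestronglyMeasurable_levelSigma [MeasurableSpace Ω] {μ : Measure Ω} {σ : ℝ → ℝ}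
    (hσ : Continuous σ) {W : (i : ℕ) → Fin (n (i + 1)) → Fin (n i) → Ω → ℝ}
    {b : (i : ℕ) → Fin (n (i + 1)) → Ω → ℝ} {ht m : Fin (n 0) → Ω → ℝ}
    {Y : NetIndex L n → Ω → ℝ} (hY : ∀ idx, netParams W b ht m idx =ᵐ[μ] Y idx)
    {h : (i : ℕ) → Fin (n i) → Ω → ℝ} (h0 : ∀ k ω, h 0 k ω = ht k ω * m k ω)
    (hrec : ∀ i < L, ∀ j ω, h (i + 1) j ω = σ (∑ k, W i j k ω * h i k ω + b i j ω)) :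
    ∀ i ≤ L, ∀ k, AEStronglyMeasurable[levelSigma Y i] (h i k) μ := by
  intro i
  induction i with
  | zero =>
    intro _ k
    refine ⟨fun ω => Y (Sum.inr (Sum.inl k)) ω * Y (Sum.inr (Sum.inr k)) ω,
      ((measurable_levelSigma (idx := Sum.inr (Sum.inl k)) le_rfl).mul
        (measurable_levelSigma (idx := Sum.inr (Sum.inr k)) le_rfl)).stronglyMeasurable, ?_⟩
    filter_upwards [hY (Sum.inr (Sum.inl k)), hY (Sum.inr (Sum.inr k))] with ω hht hm
    rw [h0, ← hht, ← hm]
    rfl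
  | succ i ih =>
    intro hi j
    replace hi : i < L := hi
    choose g hg hhg using ih hi.le
    have hW (k : Fin (n i)) := hY (Sum.inl (Sum.inl ⟨⟨i, hi⟩, (j, k)⟩))
    have hb := hY (Sum.inl (Sum.inr ⟨⟨i, hi⟩, j⟩))
    refine ⟨fun ω => σ (∑ k, Y (Sum.inl (Sum.inl ⟨⟨i, hi⟩, (j, k)⟩)) ω * g k ω
      + Y (Sum.inl (Sum.inr ⟨⟨i, hi⟩, j⟩)) ω), ?_, ?_⟩
    · refine (hσ.measurable.comp ((Finset.measurable_fun_sum _ fun k _ => ?_).add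
        (measurable_levelSigma (idx := Sum.inl (Sum.inr ⟨⟨i, hi⟩, j⟩)) le_rfl))).stronglyMeasurable
      exact (measurable_levelSigma (idx := Sum.inl (Sum.inl ⟨⟨i, hi⟩, (j, k)⟩)) le_rfl).mul
        ((hg k).measurable.mono (levelSigma_mono Y i.le_succ) le_rfl)
    · filter_upwards [ae_all_iff.2 hW, ae_all_iff.2 hhg, hb] with ω hWω hhω hbω
      rw [hrec i hi j ω, ← hbω]
      congr 2
      exact Finset.sum_congr rfl fun k _ => by rw [← hWω k, ← hhω k]; rfl

end NetworkParameters

theorem vsp_affine_network_general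
    {Ω : Type*} [MeasureSpace Ω] [IsProbabilityMeasure (ℙ : Measure Ω)]
    (L : ℕ) (n : ℕ → ℕ)
    (σ : ℝ → ℝ) (a c : ℝ) (hσ : ∀ x, σ x = a * x + c)
    (W : (i : ℕ) → Fin (n (i + 1)) → Fin (n i) → Ω → ℝ)
    (b : (i : ℕ) → Fin (n (i + 1)) → Ω → ℝ)
    (ht m : Fin (n 0) → Ω → ℝ)
    (μw μb : ℕ → ℝ) (μx μm : ℝ)
    (hWint : ∀ i < L, ∀ (j : Fin (n (i + 1))) (k : Fin (n i)), Integrable (W i j k))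
    (hWmean : ∀ i < L, ∀ (j : Fin (n (i + 1))) (k : Fin (n i)), ∫ ω, W i j k ω = μw i)
    (hbint : ∀ i < L, ∀ (j : Fin (n (i + 1))), Integrable (b i j))
    (hbmean : ∀ i < L, ∀ (j : Fin (n (i + 1))), ∫ ω, b i j ω = μb i)
    (hhint : ∀ k, Integrable (ht k)) (hhmean : ∀ k, ∫ ω, ht k ω = μx)
    (hmint : ∀ k, Integrable (m k)) (hmmean : ∀ k, ∫ ω, m k ω = μm)
    (hindep : iIndepFun
      (Sum.elim
        (Sum.elim
          (fun p : Σ i : Fin L, Fin (n ((i : ℕ) + 1)) × Fin (n (i : ℕ)) =>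
            W p.1 p.2.1 p.2.2)
          (fun p : Σ i : Fin L, Fin (n ((i : ℕ) + 1)) => b p.1 p.2))
        (Sum.elim ht m)) ℙ)
    (h : (i : ℕ) → Fin (n i) → Ω → ℝ)
    (h0 : ∀ (k : Fin (n 0)) (ω : Ω), h 0 k ω = ht k ω * m k ω)
    (hrec : ∀ i < L, ∀ (j : Fin (n (i + 1))) (ω : Ω),
      h (i + 1) j ω = σ (∑ k, W i j k ω * h i k ω + b i j ω)) :
    ∀ l : Fin (n L), Integrable (h L l) ∧
      ∫ ω, h L l ω = layerComp σ n μw μb L (μx * μm) := by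
  have hXae : ∀ idx : NetIndex L n, AEMeasurable (netParams W b ht m idx) ℙ := by
    rintro ((⟨i, j, k⟩ | ⟨i, j⟩) | (k | k))
    exacts [(hWint i i.isLt j k).aemeasurable, (hbint i i.isLt j).aemeasurable,
      (hhint k).aemeasurable, (hmint k).aemeasurable]
  -- integrable parameters are only a.e. measurable: pass to measurable modifications, which
  -- generate the σ-algebras of the layers
  have hY : iIndepFun (fun idx => (hXae idx).mk) ℙ := hindep.congr fun idx => (hXae idx).ae_eq_mk
  have hlevel := aestronglyMeasurable_levelSigma (by rw [funext hσ]; fun_prop)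
    (fun idx => (hXae idx).ae_eq_mk) h0 hrec
  have hWh : ∀ i < L, ∀ j k, IndepFun (W i j k) (h i k) ℙ := fun i hi j k =>
    (hY.indepFun_of_aestronglyMeasurable_iSup (fun idx => (hXae idx).measurable_mk)
      (i := Sum.inl (Sum.inl ⟨⟨i, hi⟩, (j, k)⟩)) (by simp [netLevel])
      (hlevel i hi.le k)).congr (hXae _).ae_eq_mk.symm (ae_eq_refl _)
  have hinput : ∀ k, Integrable (h 0 k) ∧ ∫ ω, h 0 k ω = μx * μm := fun k => by
    have hind : IndepFun (ht k) (m k) ℙ :=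
      hindep.indepFun (i := Sum.inr (Sum.inl k)) (j := Sum.inr (Sum.inr k)) (by simp)
    rw [show h 0 k = ht k * m k from funext (h0 k)]
    refine ⟨hind.integrable_mul (hhint k) (hmint k), ?_⟩
    rw [hind.integral_mul_eq_mul_integral (hhint k).1 (hmint k).1, hhmean, hmmean]
  exact integrable_and_integral_eq_layerComp hσ hWint hWmean hbint hbmean hWh hinput hrec L le_rfl

/-- **Theorem 2 (variable sparsity problem for affine activations).**
An `L`-layer network with affine activation `σ x = a x + c` is applied to the
zero-imputed input `h⁰ₖ = h̃⁰ₖ · mₖ`.  Layer `i` (for `0 ≤ i < L`) has weight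
matrix `W i` with integrable mean-`μw i` entries and bias `b i` with integrable
mean-`μb i` coordinates; features have mean `μx`, masks mean `μm`, and all
weights, biases, features and masks are mutually independent.  Then every
output coordinate `h L l` is integrable and
`E[h L l] = (f_L ∘ ⋯ ∘ f_1)(μx · μm)` where `f_{i+1}(x) = σ (n i · μw i · x + μb i)`. -/
theorem vsp_affine_network
    {Ω : Type*} [MeasureSpace Ω] [IsProbabilityMeasure (ℙ : Measure Ω)]
    (L : ℕ) (hL : 1 ≤ L) (n : ℕ → ℕ) (hn : ∀ i ≤ L, 1 ≤ n i)
    (σ : ℝ → ℝ) (a c : ℝ) (hσ : ∀ x, σ x = a * x + c)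
    (W : (i : ℕ) → Fin (n (i + 1)) → Fin (n i) → Ω → ℝ)
    (b : (i : ℕ) → Fin (n (i + 1)) → Ω → ℝ)
    (ht m : Fin (n 0) → Ω → ℝ)
    (μw μb : ℕ → ℝ) (μx μm : ℝ)
    (hWint : ∀ i < L, ∀ (j : Fin (n (i + 1))) (k : Fin (n i)), Integrable (W i j k))
    (hWmean : ∀ i < L, ∀ (j : Fin (n (i + 1))) (k : Fin (n i)), ∫ ω, W i j k ω = μw i)
    (hbint : ∀ i < L, ∀ (j : Fin (n (i + 1))), Integrable (b i j))
    (hbmean : ∀ i < L, ∀ (j : Fin (n (i + 1))), ∫ ω, b i j ω = μb i)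
    (hhint : ∀ k, Integrable (ht k)) (hhmean : ∀ k, ∫ ω, ht k ω = μx)
    (hmint : ∀ k, Integrable (m k)) (hmmean : ∀ k, ∫ ω, m k ω = μm)
    (hindep : iIndepFun
      (Sum.elim
        (Sum.elim
          (fun p : Σ i : Fin L, Fin (n ((i : ℕ) + 1)) × Fin (n (i : ℕ)) =>
            W p.1 p.2.1 p.2.2)
          (fun p : Σ i : Fin L, Fin (n ((i : ℕ) + 1)) => b p.1 p.2))
        (Sum.elim ht m)) ℙ)
    (h : (i : ℕ) → Fin (n i) → Ω → ℝ)
    (h0 : ∀ (k : Fin (n 0)) (ω : Ω), h 0 k ω = ht k ω * m k ω)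
    (hrec : ∀ i < L, ∀ (j : Fin (n (i + 1))) (ω : Ω),
      h (i + 1) j ω = σ (∑ k, W i j k ω * h i k ω + b i j ω)) :
    ∀ l : Fin (n L), Integrable (h L l) ∧
      ∫ ω, h L l ω = layerComp σ n μw μb L (μx * μm) :=
  vsp_affine_network_general L n σ a c hσ W b ht m μw μb μx μm hWint hWmean hbint hbmean hhint
    hhmean hmint hmmean hindep h h0 hrec
end
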